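/- Let G be obtained from a 5-cycle by attaching pendant edges so that exactly two cycle vertices, at distance 2 on the cycle, have pendant edges. Then the strong chromatic index of G equals max over those vertices u of d(u) + 2. -/

import Mathlib

open SimpleGraph

/-- Two edges of `G` are within distance at most 2: they share a vertex, or some edge of `G`
joins an endpoint of one to an endpoint of the other. -/
def EdgesNear {V : Type*} (G : SimpleGraph V) (e f : Sym2 V) : Prop :=
  (∃ x, x ∈ e ∧ x ∈ f) ∨ (∃ x y, x ∈ e ∧ y ∈ f ∧ G.Adj x y)

/-- `c` assigns distinct colours to any two distinct edges of `G` at distance at most 2. -/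
def IsStrongEdgeColoringOn {V : Type*} (G : SimpleGraph V) (c : Sym2 V → ℕ) : Prop :=
  ∀ e ∈ G.edgeSet, ∀ f ∈ G.edgeSet, e ≠ f → EdgesNear G e f → c e ≠ c f

/-- A strong edge-colouring of `G` with `k` colours. -/
def IsStrongEdgeColoring {V : Type*} (G : SimpleGraph V) (k : ℕ) (c : Sym2 V → ℕ) : Prop :=
  (∀ e ∈ G.edgeSet, c e < k) ∧ IsStrongEdgeColoringOn G c

/-- The strong chromatic index of `G`. -/
noncomputable def sci {V : Type*} (G : SimpleGraph V) : ℕ :=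
  sInf {k | ∃ c : Sym2 V → ℕ, IsStrongEdgeColoring G k c}

/-- Degree of a vertex (cardinality of its neighbour set). -/
noncomputable def sdeg {V : Type*} (G : SimpleGraph V) (v : V) : ℕ :=
  (G.neighborSet v).ncard

/-- The graph obtained from the cycle `C_n` (on vertices `Sum.inl i`, `i : Fin n`)
by attaching `p i` pendant edges at the cycle vertex `i` (the pendant neighbours of `i`
are the vertices `Sum.inr ⟨i, x⟩`). -/
def pufferGraph (n : ℕ) (p : Fin n → ℕ) :
    SimpleGraph (Fin n ⊕ Σ i : Fin n, Fin (p i)) :=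
  SimpleGraph.fromRel (fun a b =>
    (∃ i j : Fin n, a = Sum.inl i ∧ b = Sum.inl j ∧ (SimpleGraph.cycleGraph n).Adj i j) ∨
    (∃ (i : Fin n) (x : Fin (p i)), a = Sum.inl i ∧ b = Sum.inr ⟨i, x⟩))

open Classical in
/-- The maximum of `d(u) + d(v)` over the edges `uv` of the cycle of `pufferGraph n p`. -/
noncomputable def maxCycleDegSum (n : ℕ) (p : Fin n → ℕ) : ℕ :=
  Finset.univ.sup fun q : Fin n × Fin n =>
    if (SimpleGraph.cycleGraph n).Adj q.1 q.2 then
      sdeg (pufferGraph n p) (Sum.inl q.1) + sdeg (pufferGraph n p) (Sum.inl q.2)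
    else 0

/-!
At a cycle vertex `w`, its `p w` pendant edges and the four cycle edges other than the one opposite
`w` are pairwise at distance at most 2 (in `C₅` any two edges are), so every strong edge-colouring
uses at least `p w + 4 = d(w) + 2` colours. Conversely, colour the cycle edges `0, …, 4`, give the
first pendant edge at `w` the colour of the cycle edge opposite `w`, and the remaining pendant
edges the colours `5, 6, …`: pendant edges at different vertices may share a colour because the
two vertices carrying them are not adjacent, so such edges are at distance 3.
-/

section StrongEdgeColoring
variable {V : Type*} {G : SimpleGraph V}

lemma EdgesNear.symm {e f : Sym2 V} (h : EdgesNear G e f) : EdgesNear G f e := by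
  rcases h with ⟨x, hxe, hxf⟩ | ⟨x, y, hx, hy, hxy⟩
  · exact .inl ⟨x, hxf, hxe⟩
  · exact .inr ⟨y, x, hy, hx, hxy.symm⟩

lemma edgesNear_mk_mk {a b c d : V} :
    EdgesNear G s(a, b) s(c, d) ↔ (a = c ∨ G.Adj a c) ∨ (a = d ∨ G.Adj a d) ∨
      (b = c ∨ G.Adj b c) ∨ (b = d ∨ G.Adj b d) := by
  simp only [EdgesNear, Sym2.mem_iff]
  constructor
  · rintro (⟨x, rfl | rfl, rfl | rfl⟩ | ⟨x, y, rfl | rfl, rfl | rfl, h⟩) <;> simp_all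
  · rintro ((rfl | h) | (rfl | h) | (rfl | h) | (rfl | h)) <;> aesop

lemma IsStrongEdgeColoring.card_le {k : ℕ} {c : Sym2 V → ℕ} (hc : IsStrongEdgeColoring G k c)
    {T : Finset (Sym2 V)} (hT : ↑T ⊆ G.edgeSet)
    (hnear : (T : Set (Sym2 V)).Pairwise (EdgesNear G)) : T.card ≤ k := by
  simpa using Finset.card_le_card_of_injOn (t := Finset.range k) c
    (fun e he => Finset.mem_range.2 (hc.1 e (hT he)))
    fun e he f hf hcef => by_contra fun hne => hc.2 e (hT he) f (hT hf) hne (hnear he hf hne) hcef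

lemma sci_eq_of_isStrongEdgeColoring {k : ℕ} {c : Sym2 V → ℕ} (hc : IsStrongEdgeColoring G k c)
    (hmin : ∀ k' c', IsStrongEdgeColoring G k' c' → k ≤ k') : sci G = k :=
  le_antisymm (Nat.sInf_le ⟨c, hc⟩) (le_csInf ⟨k, c, hc⟩ fun _ ⟨c', hc'⟩ => hmin _ c' hc')

end StrongEdgeColoring

section Puffer
variable {n : ℕ} {p : Fin n → ℕ}

@[simp] lemma pufferGraph_adj_inl_inl {i j : Fin n} :
    (pufferGraph n p).Adj (.inl i) (.inl j) ↔ (cycleGraph n).Adj i j := by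
  simp [pufferGraph, adj_comm _ j i]
  exact fun h => h.ne

@[simp] lemma pufferGraph_adj_inl_inr {i : Fin n} {a : Σ j, Fin (p j)} :
    (pufferGraph n p).Adj (.inl i) (.inr a) ↔ a.1 = i := by
  obtain ⟨j, x⟩ := a
  simp only [pufferGraph, fromRel_adj]
  aesop

@[simp] lemma pufferGraph_adj_inr_inl {i : Fin n} {a : Σ j, Fin (p j)} :
    (pufferGraph n p).Adj (.inr a) (.inl i) ↔ a.1 = i := by
  rw [adj_comm, pufferGraph_adj_inl_inr]

@[simp] lemma pufferGraph_not_adj_inr_inr {a b : Σ j, Fin (p j)} :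
    ¬ (pufferGraph n p).Adj (.inr a) (.inr b) := by
  simp [pufferGraph]

lemma pufferGraph_neighborSet_inl (w : Fin n) :
    (pufferGraph n p).neighborSet (.inl w) =
      Sum.inl '' (cycleGraph n).neighborSet w ∪
        Set.range (fun x : Fin (p w) => .inr ⟨w, x⟩) := by
  ext (j | ⟨j, x⟩)
  · simp
  · simp only [mem_neighborSet, pufferGraph_adj_inl_inr, Set.mem_union, Set.mem_range]
    constructor
    · rintro rfl
      exact .inr ⟨x, rfl⟩
    · rintro (⟨_, -, h⟩ | ⟨_, h⟩) <;> cases h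
      rfl

lemma sdeg_pufferGraph_inl {p : Fin (n + 3) → ℕ} (w : Fin (n + 3)) :
    sdeg (pufferGraph (n + 3) p) (.inl w) = p w + 2 := by
  have hinj : Function.Injective
      (fun x : Fin (p w) => (.inr ⟨w, x⟩ : Fin (n + 3) ⊕ Σ j, Fin (p j))) := by
    intro x y h
    simpa using h
  rw [sdeg, pufferGraph_neighborSet_inl, Set.ncard_union_eq (by simp [Set.disjoint_left]),
    Set.ncard_image_of_injective _ Sum.inl_injective, ← coe_neighborFinset, Set.ncard_coe_finset,
    card_neighborFinset_eq_degree, cycleGraph_degree_three_le, Set.ncard_range_of_injective hinj,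
    Nat.card_eq_fintype_card, Fintype.card_fin, add_comm]

variable (p) in
def cycleEdge [NeZero n] (i : Fin n) : Sym2 (Fin n ⊕ Σ j, Fin (p j)) :=
  s(.inl i, .inl (i + 1))

variable (p) in
def pendantEdge (w : Fin n) (x : Fin (p w)) : Sym2 (Fin n ⊕ Σ j, Fin (p j)) :=
  s(.inl w, .inr ⟨w, x⟩)

lemma pendantEdge_mem_edgeSet (w : Fin n) (x : Fin (p w)) :
    pendantEdge p w x ∈ (pufferGraph n p).edgeSet := by
  simp [pendantEdge]

lemma pendantEdge_injective (w : Fin n) : Function.Injective (pendantEdge p w) := by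
  intro x y h
  simpa [pendantEdge] using h

lemma EdgesNear.pendantEdge_pendantEdge {w w' : Fin n} {x : Fin (p w)} {x' : Fin (p w')}
    (h : EdgesNear (pufferGraph n p) (pendantEdge p w x) (pendantEdge p w' x')) :
    w = w' ∨ (cycleGraph n).Adj w w' := by
  simp only [pendantEdge, edgesNear_mk_mk] at h
  aesop

lemma cycleEdge_mem_edgeSet {p : Fin (n + 2) → ℕ} (i : Fin (n + 2)) :
    cycleEdge p i ∈ (pufferGraph (n + 2) p).edgeSet := by
  simp [cycleEdge, cycleGraph_adj]

lemma eq_cycleEdge_or_pendantEdge {p : Fin (n + 2) → ℕ}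
    {e : Sym2 (Fin (n + 2) ⊕ Σ j, Fin (p j))} (he : e ∈ (pufferGraph (n + 2) p).edgeSet) :
    (∃ i, e = cycleEdge p i) ∨ ∃ w x, e = pendantEdge p w x := by
  induction e using Sym2.ind with | _ a b => ?_
  rcases a with i | ⟨w, x⟩ <;> rcases b with j | ⟨w', x'⟩
  · rcases cycleGraph_adj.1 (pufferGraph_adj_inl_inl.1 he) with h | h
    · exact .inl ⟨j, by rw [cycleEdge, ← sub_eq_iff_eq_add'.1 h, Sym2.eq_swap]⟩
    · exact .inl ⟨i, by rw [cycleEdge, ← sub_eq_iff_eq_add'.1 h]⟩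
  · obtain rfl : w' = i := pufferGraph_adj_inl_inr.1 he
    exact .inr ⟨w', x', rfl⟩
  · obtain rfl : w = j := pufferGraph_adj_inr_inl.1 he
    exact .inr ⟨w, x, Sym2.eq_swap⟩
  · exact (pufferGraph_not_adj_inr_inr he).elim

end Puffer

section PufferC5
variable {p : Fin 5 → ℕ}

lemma cycleEdge_injective : Function.Injective (cycleEdge p) := by
  intro i j h
  simp only [cycleEdge, Sym2.eq_iff, Sum.inl.injEq] at h
  revert i j
  decide

lemma edgesNear_cycleEdge_cycleEdge (i j : Fin 5) :
    EdgesNear (pufferGraph 5 p) (cycleEdge p i) (cycleEdge p j) := by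
  simp only [cycleEdge, edgesNear_mk_mk, Sum.inl.injEq, pufferGraph_adj_inl_inl]
  revert i j
  decide

lemma edgesNear_cycleEdge_pendantEdge_iff {i w : Fin 5} {x : Fin (p w)} :
    EdgesNear (pufferGraph 5 p) (cycleEdge p i) (pendantEdge p w x) ↔ i ≠ w + 2 := by
  simp only [cycleEdge, pendantEdge, edgesNear_mk_mk, Sum.inl.injEq, pufferGraph_adj_inl_inl,
    pufferGraph_adj_inl_inr, reduceCtorEq, false_or]
  clear x
  revert i w
  decide

lemma IsStrongEdgeColoring.add_four_le {k : ℕ} {c : Sym2 (Fin 5 ⊕ Σ j, Fin (p j)) → ℕ}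
    (hc : IsStrongEdgeColoring (pufferGraph 5 p) k c) (w : Fin 5) : p w + 4 ≤ k := by
  classical
  let T := Finset.univ.image (pendantEdge p w) ∪ (Finset.univ.erase (w + 2)).image (cycleEdge p)
  have hcard : T.card = p w + 4 := by
    rw [Finset.card_union_of_disjoint (by simp [Finset.disjoint_left, pendantEdge, cycleEdge]),
      Finset.card_image_of_injective _ (pendantEdge_injective w),
      Finset.card_image_of_injective _ cycleEdge_injective,
      Finset.card_erase_of_mem (Finset.mem_univ _)]
    simp
  refine hcard ▸ hc.card_le ?_ ?_
  · intro e he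
    simp only [T, Finset.coe_union, Finset.coe_image, Set.mem_union, Set.mem_image] at he
    rcases he with ⟨x, -, rfl⟩ | ⟨i, -, rfl⟩
    exacts [pendantEdge_mem_edgeSet w x, cycleEdge_mem_edgeSet i]
  · intro e he f hf _
    simp only [T, Finset.coe_union, Finset.coe_image, Finset.coe_erase, Set.mem_union,
      Set.mem_image, Set.mem_sdiff, Set.mem_singleton_iff] at he hf
    rcases he with ⟨x, -, rfl⟩ | ⟨i, ⟨-, hi⟩, rfl⟩ <;>
      rcases hf with ⟨y, -, rfl⟩ | ⟨j, ⟨-, hj⟩, rfl⟩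
    · exact .inl ⟨.inl w, Sym2.mem_mk_left _ _, Sym2.mem_mk_left _ _⟩
    · exact (edgesNear_cycleEdge_pendantEdge_iff.2 hj).symm
    · exact edgesNear_cycleEdge_pendantEdge_iff.2 hi
    · exact edgesNear_cycleEdge_cycleEdge i j

/-- The first pendant edge at `w` reuses the colour `2w` of the cycle edge `{w + 2, w + 3}`, the
only cycle edge farther than distance 2 from it; the other pendant edges get colours above 4. -/
def pendantColor (w : Fin 5) (x : ℕ) : ℕ :=
  if x = 0 then (w + w).val else x + 4

lemma pendantColor_injective (w : Fin 5) : Function.Injective (pendantColor w) := by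
  intro x y h
  have := (w + w).isLt
  unfold pendantColor at h
  split_ifs at h <;> omega

variable (p) in
/-- The cycle edge `{i, i + 1}` gets colour `2i + 1 mod 5`, so the five cycle edges, which pairwise
conflict in `C₅`, use the five colours `0, …, 4`. -/
def pufferC5Coloring : Sym2 (Fin 5 ⊕ Σ j, Fin (p j)) → ℕ :=
  Sym2.lift ⟨fun a b => match a, b with
    | .inl i, .inl j => (i + j).val
    | .inl _, .inr a | .inr a, .inl _ => pendantColor a.1 a.2
    | .inr _, .inr _ => 0, by rintro (i | a) (j | b) <;> simp [add_comm]⟩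

lemma pufferC5Coloring_cycleEdge (i : Fin 5) :
    pufferC5Coloring p (cycleEdge p i) = (i + (i + 1)).val := rfl

lemma pufferC5Coloring_pendantEdge (w : Fin 5) (x : Fin (p w)) :
    pufferC5Coloring p (pendantEdge p w x) = pendantColor w x := rfl

lemma pufferC5Coloring_cycleEdge_injective :
    Function.Injective fun i => pufferC5Coloring p (cycleEdge p i) := by
  simp only [Function.Injective, pufferC5Coloring_cycleEdge]
  decide

lemma pufferC5Coloring_cycleEdge_ne_pendantEdge {i w : Fin 5} (x : Fin (p w)) (hi : i ≠ w + 2) :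
    pufferC5Coloring p (cycleEdge p i) ≠ pufferC5Coloring p (pendantEdge p w x) := by
  rw [pufferC5Coloring_cycleEdge, pufferC5Coloring_pendantEdge, pendantColor]
  split_ifs
  · have key : ∀ i w : Fin 5, i ≠ w + 2 → (i + (i + 1)).val ≠ (w + w).val := by decide
    exact key i w hi
  · have := (i + (i + 1)).isLt
    omega

theorem isStrongEdgeColoring_pufferC5Coloring {k : ℕ} (hk : 5 ≤ k) (hp : ∀ w, p w + 4 ≤ k)
    (hindep : ∀ w w', (cycleGraph 5).Adj w w' → p w = 0 ∨ p w' = 0) :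
    IsStrongEdgeColoring (pufferGraph 5 p) k (pufferC5Coloring p) := by
  refine ⟨fun e he => ?_, fun e he f hf hne hnear => ?_⟩
  · rcases eq_cycleEdge_or_pendantEdge he with ⟨i, rfl⟩ | ⟨w, x, rfl⟩
    · exact (Fin.is_lt _).trans_le hk
    · have := (w + w).isLt
      have := x.isLt
      have := hp w
      rw [pufferC5Coloring_pendantEdge, pendantColor]
      split_ifs <;> omega
  rcases eq_cycleEdge_or_pendantEdge he with ⟨i, rfl⟩ | ⟨w, x, rfl⟩ <;>
    rcases eq_cycleEdge_or_pendantEdge hf with ⟨j, rfl⟩ | ⟨w', x', rfl⟩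
  · exact fun h => hne (congrArg _ (pufferC5Coloring_cycleEdge_injective h))
  · exact pufferC5Coloring_cycleEdge_ne_pendantEdge x'
      (edgesNear_cycleEdge_pendantEdge_iff.1 hnear)
  · exact (pufferC5Coloring_cycleEdge_ne_pendantEdge x
      (edgesNear_cycleEdge_pendantEdge_iff.1 hnear.symm)).symm
  · rcases hnear.pendantEdge_pendantEdge with rfl | hadj
    · exact fun h => hne (congrArg _ (Fin.ext (pendantColor_injective w h)))
    · rcases hindep w w' hadj with h | h
      exacts [absurd h x.pos.ne', absurd h x'.pos.ne']

end PufferC5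

theorem sci_C5_two_pendant_vertices_general (p : Fin 5 → ℕ) (u : Fin 5)
    (hu : 1 ≤ p u) (h : ∀ i, i ≠ u → i ≠ u + 2 → p i = 0) :
    sci (pufferGraph 5 p) =
      max (sdeg (pufferGraph 5 p) (Sum.inl u)) (sdeg (pufferGraph 5 p) (Sum.inl (u + 2))) + 2 := by
  have hp (w : Fin 5) : p w ≤ max (p u) (p (u + 2)) := by
    by_cases hwu : w = u
    · exact hwu ▸ le_max_left _ _
    by_cases hwv : w = u + 2
    · exact hwv ▸ le_max_right _ _
    exact h w hwu hwv ▸ Nat.zero_le _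
  have hindep (w w' : Fin 5) (hadj : (cycleGraph 5).Adj w w') : p w = 0 ∨ p w' = 0 := by
    have : ∀ u w w' : Fin 5, (cycleGraph 5).Adj w w' →
        (w ≠ u ∧ w ≠ u + 2) ∨ (w' ≠ u ∧ w' ≠ u + 2) := by decide
    rcases this u w w' hadj with ⟨h1, h2⟩ | ⟨h1, h2⟩
    exacts [.inl (h w h1 h2), .inr (h w' h1 h2)]
  have hcol := isStrongEdgeColoring_pufferC5Coloring (k := max (p u) (p (u + 2)) + 4)
    (by omega) (fun w => by have := hp w; omega) hindep
  rw [sdeg_pufferGraph_inl, sdeg_pufferGraph_inl, sci_eq_of_isStrongEdgeColoring hcol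
    fun k c hc => by have := hc.add_four_le u; have := hc.add_four_le (u + 2); omega]
  omega

/-- For a 5-cycle with pendant edges attached at exactly two cycle vertices at distance 2
on the cycle, the strong chromatic index equals the maximum over those two vertices `u` of
`d(u) + 2`. -/
theorem sci_C5_two_pendant_vertices (p : Fin 5 → ℕ) (u : Fin 5)
    (hu : 1 ≤ p u) (hv : 1 ≤ p (u + 2)) (h : ∀ i, i ≠ u → i ≠ u + 2 → p i = 0) :
    sci (pufferGraph 5 p) =
      max (sdeg (pufferGraph 5 p) (Sum.inl u)) (sdeg (pufferGraph 5 p) (Sum.inl (u + 2))) + 2 :=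
  sci_C5_two_pendant_vertices_general p u hu h
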